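/- Let n > 1 and let x ∈ ℂ with |x| < 1. Then Φ_n^*(x) = exp(−∑_{k=1}^∞ c_n^*(k) x^k / k), where the series on the right converges absolutely. -/

import Mathlib

open Complex Polynomial Finset

/-- The unitary gcd `(j,n)_*`: the largest `d` with `d ∣ j`, `d ∣ n` and `gcd(d, n/d) = 1`. -/
def ugcd (j n : ℕ) : ℕ :=
  Nat.findGreatest (fun d => d ∣ j ∧ d ∣ n ∧ Nat.gcd d (n / d) = 1) n

/-- The unitary cyclotomic polynomial `Φ_n^*(X) = ∏_{1 ≤ j ≤ n, (j,n)_* = 1} (X − ζ_n^j)`. -/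
noncomputable def unitaryCyc (n : ℕ) : Polynomial ℂ :=
  ∏ j ∈ (Finset.Icc 1 n).filter (fun j => ugcd j n = 1),
    (X - C (Complex.exp (2 * Real.pi * Complex.I / n) ^ j))

/-- The unitary Ramanujan sum `c_n^*(k) = ∑_{1 ≤ j ≤ n, (j,n)_* = 1} exp(2πijk/n)`. -/
noncomputable def unitaryRamanujanSum (n k : ℕ) : ℂ :=
  ∑ j ∈ (Finset.Icc 1 n).filter (fun j => ugcd j n = 1),
    Complex.exp (2 * Real.pi * Complex.I * j * k / n)

/-!
The set `S = unitaryCoprimes n` of `1 ≤ j ≤ n` with `(j,n)_* = 1` is invariant under `j ↦ n - j`, and for `n > 1` it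
does not contain `n`. Hence with `ζ = ζ_n`, `∏_{j∈S} (x - ζ^j) = ∏_{j∈S} (-ζ^j) · ∏_{j∈S} (1 - ζ^j x)`,
where the constant is `1` because the factors `-ζ^j` pair off to `1` (a self-paired `j = n/2`
contributes `-ζ^{n/2} = 1`). Finally `c_n^*(k) x^k = ∑_{j∈S} (ζ^j x)^k`, so the series is the sum over
`j ∈ S` of the Taylor series of `-log (1 - ζ^j x)`.
-/

def unitaryCoprimes (n : ℕ) : Finset ℕ :=
  (Finset.Icc 1 n).filter (fun j => ugcd j n = 1)

lemma ugcd_sub_self {j n : ℕ} (hj : j ≤ n) : ugcd (n - j) n = ugcd j n := by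
  unfold ugcd
  congr 1
  ext d
  refine and_congr_left fun ⟨hdn, _⟩ => ⟨fun hd => ?_, fun hd => Nat.dvd_sub hdn hd⟩
  simpa [Nat.sub_sub_self hj] using Nat.dvd_sub hdn hd

lemma ugcd_self {n : ℕ} (hn : 0 < n) : ugcd n n = n :=
  Nat.findGreatest_eq ⟨dvd_rfl, dvd_rfl, by rw [Nat.div_self hn, Nat.gcd_one_right]⟩

lemma mem_unitaryCoprimes {j n : ℕ} :
    j ∈ unitaryCoprimes n ↔ (1 ≤ j ∧ j ≤ n) ∧ ugcd j n = 1 := by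
  rw [unitaryCoprimes, mem_filter, mem_Icc]

lemma le_of_mem_unitaryCoprimes {j n : ℕ} (hj : j ∈ unitaryCoprimes n) : j ≤ n :=
  (mem_unitaryCoprimes.mp hj).1.2

lemma sub_mem_unitaryCoprimes {j n : ℕ} (hn : 1 < n) (hj : j ∈ unitaryCoprimes n) :
    n - j ∈ unitaryCoprimes n := by
  obtain ⟨⟨hj1, hjn⟩, hju⟩ := mem_unitaryCoprimes.mp hj
  have hj_ne : j ≠ n := by
    rintro rfl
    rw [ugcd_self (by omega)] at hju
    omega
  exact mem_unitaryCoprimes.mpr ⟨⟨by omega, by omega⟩, by rw [ugcd_sub_self hjn, hju]⟩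

lemma unitaryCyc_eval (n : ℕ) (x : ℂ) :
    (unitaryCyc n).eval x =
      ∏ j ∈ unitaryCoprimes n, (x - Complex.exp (2 * Real.pi * Complex.I / n) ^ j) := by
  simp [unitaryCyc, unitaryCoprimes, eval_prod]

lemma unitaryRamanujanSum_mul_pow (n k : ℕ) (x : ℂ) :
    unitaryRamanujanSum n k * x ^ k =
      ∑ j ∈ unitaryCoprimes n, (Complex.exp (2 * Real.pi * Complex.I / n) ^ j * x) ^ k := by
  rw [unitaryRamanujanSum, sum_mul]
  refine sum_congr rfl fun j _ => ?_
  rw [mul_pow, ← pow_mul, ← Complex.exp_nat_mul]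
  push_cast
  ring_nf

section Reflection

variable {R : Type*} [CommRing R] [IsDomain R] {ζ : R} {n : ℕ} {S : Finset ℕ}

lemma IsPrimitiveRoot.prod_neg_pow_eq_one_of_reflect (hζ : IsPrimitiveRoot ζ n) (hn : 0 < n)
    (hS : ∀ j ∈ S, j ≤ n ∧ n - j ∈ S) : ∏ j ∈ S, -ζ ^ j = 1 := by
  refine prod_involution (fun j _ => n - j) (fun j hj => ?_) (fun j hj hne hfix => hne ?_)
    (fun j hj => (hS j hj).2) (fun j hj => Nat.sub_sub_self (hS j hj).1)
  · rw [neg_mul_neg, ← pow_add, Nat.add_sub_cancel' (hS j hj).1, hζ.pow_eq_one]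
  · have h2j : n = j * 2 := by omega
    have hj0 : j ≠ 0 := by omega
    have hζj : IsPrimitiveRoot (ζ ^ j) 2 := by
      simpa [h2j, hj0] using hζ.pow_of_dvd hj0 (Dvd.intro 2 h2j.symm)
    rw [hζj.eq_neg_one_of_two_right, neg_neg]

lemma IsPrimitiveRoot.prod_sub_pow_eq_prod_one_sub_pow_mul (hζ : IsPrimitiveRoot ζ n)
    (hn : 0 < n) (hS : ∀ j ∈ S, j ≤ n ∧ n - j ∈ S) (x : R) :
    ∏ j ∈ S, (x - ζ ^ j) = ∏ j ∈ S, (1 - ζ ^ j * x) := by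
  have hfactor : ∀ j ∈ S, x - ζ ^ j = -ζ ^ j * (1 - ζ ^ (n - j) * x) := by
    intro j hj
    have hinv : ζ ^ j * ζ ^ (n - j) = 1 := by
      rw [← pow_add, Nat.add_sub_cancel' (hS j hj).1, hζ.pow_eq_one]
    linear_combination -x * hinv
  have hreflect : ∏ j ∈ S, (1 - ζ ^ (n - j) * x) = ∏ j ∈ S, (1 - ζ ^ j * x) :=
    prod_nbij' (n - ·) (n - ·) (fun j hj => (hS j hj).2) (fun j hj => (hS j hj).2)
      (fun j hj => Nat.sub_sub_self (hS j hj).1) (fun j hj => Nat.sub_sub_self (hS j hj).1)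
      (fun _ _ => rfl)
  rw [prod_congr rfl hfactor, prod_mul_distrib, hζ.prod_neg_pow_eq_one_of_reflect hn hS, one_mul,
    hreflect]

end Reflection

lemma Complex.hasSum_sum_pow_succ_div {ι : Type*} (s : Finset ι) {w : ι → ℂ}
    (hw : ∀ i ∈ s, ‖w i‖ < 1) :
    HasSum (fun k : ℕ => ∑ i ∈ s, w i ^ (k + 1) / (k + 1)) (-∑ i ∈ s, log (1 - w i)) := by
  rw [← sum_neg_distrib]
  exact hasSum_sum fun i hi => hasSum_taylorSeries_neg_log' (hw i hi)

theorem stmt18 (n : ℕ) (hn : 1 < n) (x : ℂ) (hx : ‖x‖ < 1) :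
    Summable (fun k : ℕ =>
      ‖unitaryRamanujanSum n (k + 1) * x ^ (k + 1) / (k + 1)‖) ∧
    (unitaryCyc n).eval x =
      Complex.exp (-∑' k : ℕ, unitaryRamanujanSum n (k + 1) * x ^ (k + 1) / (k + 1)) := by
  set ζ := Complex.exp (2 * Real.pi * Complex.I / n)
  have hζ : IsPrimitiveRoot ζ n := Complex.isPrimitiveRoot_exp n (by omega)
  have hw : ∀ j, ‖ζ ^ j * x‖ < 1 := fun j => by
    rwa [norm_mul, norm_pow, hζ.norm'_eq_one (by omega), one_pow, one_mul]
  have hsum : HasSum (fun k : ℕ => unitaryRamanujanSum n (k + 1) * x ^ (k + 1) / (k + 1))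
      (-∑ j ∈ unitaryCoprimes n, log (1 - ζ ^ j * x)) := by
    simpa only [unitaryRamanujanSum_mul_pow, sum_div] using
      hasSum_sum_pow_succ_div (unitaryCoprimes n) fun j _ => hw j
  refine ⟨summable_norm_iff.mpr hsum.summable, ?_⟩
  have hS : ∀ j ∈ unitaryCoprimes n, j ≤ n ∧ n - j ∈ unitaryCoprimes n := fun j hj =>
    ⟨le_of_mem_unitaryCoprimes hj, sub_mem_unitaryCoprimes hn hj⟩
  rw [hsum.tsum_eq, neg_neg, exp_sum, unitaryCyc_eval,
    hζ.prod_sub_pow_eq_prod_one_sub_pow_mul (by omega) hS]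
  refine prod_congr rfl fun j _ => (exp_log fun h => (hw j).ne' ?_).symm
  rw [← sub_eq_zero.mp h, norm_one]
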